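/- arXiv:1811.08372 — 2 statements merged into one kernel-verified Lean document; each statement's English description precedes it below -/
import Mathlib

section
/- Let G be a chain graph and H its canonical LWF DAH. Then H is a directed acyclic hypergraph, i.e., H contains no partially directed cycle. -/
namespace BH

variable {V : Type*}

/-- The edge set of a directed hypergraph on vertex set `V`:
each hyperedge is an ordered pair `(tail, head)` of subsets of `V`. -/
abbrev HEdges (V : Type*) := Set (Set V × Set V)

/-- Every hyperedge has disjoint tail and head. -/
def HDisjoint (E : HEdges V) : Prop := ∀ h ∈ E, Disjoint h.1 h.2

/-- `u` is a parent of `v` in the directed hypergraph. -/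
def hPar (E : HEdges V) (u v : V) : Prop := ∃ h ∈ E, u ∈ h.1 ∧ v ∈ h.2

/-- `u` and `v` are neighbors (co-head) in the directed hypergraph. -/
def hNbr (E : HEdges V) (u v : V) : Prop := ∃ h ∈ E, u ∈ h.2 ∧ v ∈ h.2 ∧ u ≠ v

/-- A partially directed cycle with respect to a neighbor relation `nbr` and a
parent relation `par`: a cyclic sequence `v_1, …, v_k, v_{k+1} = v_1` in which every
step is a neighbor-or-parent step and at least one step is a parent step. -/
def PDCycle (nbr par : V → V → Prop) : Prop :=
  ∃ (n : ℕ) (f : ZMod (n + 1) → V),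
    (∀ i, nbr (f i) (f (i + 1)) ∨ par (f i) (f (i + 1))) ∧
    (∃ i, par (f i) (f (i + 1)))

/-- A directed hypergraph is acyclic if it has no partially directed cycle. -/
def HAcyclic (E : HEdges V) : Prop := ¬ PDCycle (hNbr E) (hPar E)

/-- Graph notions: a graph on `V` is a set of ordered pairs.
`u` is a parent of `v` if `(u,v)` is a directed edge. -/
def gPar (E : Set (V × V)) (u v : V) : Prop := (u, v) ∈ E ∧ (v, u) ∉ E

/-- `u` and `v` are neighbors if `(u,v)` is an undirected edge. -/
def gNbr (E : Set (V × V)) (u v : V) : Prop := (u, v) ∈ E ∧ (v, u) ∈ E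

/-- A chain graph is a graph with no partially directed cycle. -/
def IsChainGraph (E : Set (V × V)) : Prop := ¬ PDCycle (gNbr E) (gPar E)

/-- The shadow of a directed hypergraph: for every hyperedge `(X,Y)`, any two
distinct vertices of `Y` are joined by an undirected edge and there is a directed
edge from every vertex of `X` to every vertex of `Y`. -/
def shadow (E : HEdges V) : Set (V × V) :=
  {p | ∃ h ∈ E, (p.1 ∈ h.2 ∧ p.2 ∈ h.2 ∧ p.1 ≠ p.2) ∨ (p.1 ∈ h.1 ∧ p.2 ∈ h.2)}

/-- Chain component of `v` in a directed hypergraph: reflexive-transitive closure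
of the co-head relation. -/
def hComp (E : HEdges V) (v : V) : Set V := {u | Relation.ReflTransGen (hNbr E) v u}

/-- The set of chain components of a directed hypergraph. -/
def hComps (E : HEdges V) : Set (Set V) := {S | ∃ v, S = hComp E v}

/-- Chain component of `v` in a graph: vertices joined to `v` by undirected paths. -/
def gComp (E : Set (V × V)) (v : V) : Set V := {u | Relation.ReflTransGen (gNbr E) v u}

/-- The set of chain components of a graph. -/
def gComps (E : Set (V × V)) : Set (Set V) := {S | ∃ v, S = gComp E v}

/-- Parent set of a vertex in a hypergraph. -/
def hPaSet (E : HEdges V) (v : V) : Set V := {u | hPar E u v}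

/-- Neighbor set of a vertex in a hypergraph. -/
def hNbSet (E : HEdges V) (v : V) : Set V := {u | hNbr E u v}

/-- Parent set of a vertex in a graph. -/
def gPaSet (E : Set (V × V)) (v : V) : Set V := {u | gPar E u v}

/-- Neighbor set of a vertex in a graph. -/
def gNbSet (E : Set (V × V)) (v : V) : Set V := {u | gNbr E u v}

/-- `pa(τ)` for a vertex set `τ` in a graph. -/
def gPaTau (E : Set (V × V)) (τ : Set V) : Set V := (⋃ v ∈ τ, gPaSet E v) \ τ

/-- `bd(τ)` for a vertex set `τ` in a graph. -/
def gBd (E : Set (V × V)) (τ : Set V) : Set V := (⋃ v ∈ τ, gPaSet E v ∪ gNbSet E v) \ τ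

/-- `cl(τ) = bd(τ) ∪ τ`. -/
def gCl (E : Set (V × V)) (τ : Set V) : Set V := gBd E τ ∪ τ

/-- `pa(τ)` for a vertex set `τ` in a hypergraph. -/
def hPaTau (E : HEdges V) (τ : Set V) : Set V := (⋃ v ∈ τ, hPaSet E v) \ τ

/-- Induced subgraph on a vertex set. -/
def gInduced (E : Set (V × V)) (A : Set V) : Set (V × V) := {p ∈ E | p.1 ∈ A ∧ p.2 ∈ A}

/-- Induced sub-hypergraph on a vertex set. -/
def hInduced (E : HEdges V) (A : Set V) : HEdges V := {h ∈ E | h.1 ∪ h.2 ⊆ A}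

/-- Anterior set of `S` with respect to neighbor/parent relations: all vertices with
a neighbor-or-parent-step path to some vertex of `S` (including `S` itself). -/
def antOf (nbr par : V → V → Prop) (S : Set V) : Set V :=
  {w | ∃ s ∈ S, Relation.ReflTransGen (fun a b => nbr a b ∨ par a b) w s}

/-- Anterior set in a graph. -/
def gAnt (E : Set (V × V)) (S : Set V) : Set V := antOf (gNbr E) (gPar E) S

/-- Anterior set in a hypergraph. -/
def hAnt (E : HEdges V) (S : Set V) : Set V := antOf (hNbr E) (hPar E) S

/-- The moral graph of a graph: its underlying undirected graph with all pairs of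
distinct vertices inside `bd(τ)` joined, for every chain component `τ`. -/
def moral (E : Set (V × V)) : Set (V × V) :=
  {p | (p.1, p.2) ∈ E ∨ (p.2, p.1) ∈ E ∨
    ∃ τ ∈ gComps E, p.1 ∈ gBd E τ ∧ p.2 ∈ gBd E τ ∧ p.1 ≠ p.2}

/-- `K` is a clique with respect to the (symmetric) pair set `U`. -/
def IsCliqueIn (U : Set (V × V)) (K : Set V) : Prop :=
  ∀ u ∈ K, ∀ v ∈ K, u ≠ v → (u, v) ∈ U

/-- `K` is a maximal clique of `U` inside the vertex set `S`. -/
def IsMaxCliqueWithin (U : Set (V × V)) (S K : Set V) : Prop :=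
  K.Nonempty ∧ K ⊆ S ∧ IsCliqueIn U K ∧
    ∀ K', K ⊆ K' → K' ⊆ S → IsCliqueIn U K' → K' = K

/-- The maximal cliques of the pair set `U`. -/
def maxCliques (U : Set (V × V)) : Set (Set V) :=
  {K | IsMaxCliqueWithin U Set.univ K}

/-- The undirected part of a graph, as a set of pairs. -/
def uPart (E : Set (V × V)) : Set (V × V) := {p | gNbr E p.1 p.2}

/-- The set of children of a vertex in a graph. -/
def children (E : Set (V × V)) (v : V) : Set V := {w | gPar E v w}

/-- Phase I, first stage of the canonical LWF DAH construction: for each vertex `v`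
with children set `S_v`, the hyperedge `({v}, K)` for every maximal clique `K` of the
undirected part of `G[S_v]`. -/
def phase1a (E : Set (V × V)) : HEdges V :=
  {h | ∃ v K, IsMaxCliqueWithin (uPart E) (children E v) K ∧ h = ({v}, K)}

/-- Phase I of the canonical LWF DAH construction. -/
def phase1 (E : Set (V × V)) : HEdges V :=
  phase1a E ∪
    {h | ∃ K, IsMaxCliqueWithin (uPart E) Set.univ K ∧
      (∀ h' ∈ phase1a E, ¬ K ⊆ h'.2) ∧ h = (∅, K)}

/-- The Phase-I hyperedges lying inside `cl(τ)` whose head meets `τ`. -/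
def HstarI (E : Set (V × V)) (τ : Set V) : HEdges V :=
  {h ∈ phase1 E | h.1 ∪ h.2 ⊆ gCl E τ ∧ (h.2 ∩ τ).Nonempty}

/-- The canonical LWF DAH of a chain graph (its set of hyperedges): for every chain
component `τ` and every nonempty family `F ⊆ H*_τ` with `B = ⋂_{h ∈ F} H(h)`, the
hyperedge `(⋃ {T(h) : h ∈ H*_τ, B ⊆ H(h)}, B)`. -/
def canonicalLWF (E : Set (V × V)) : HEdges V :=
  {e | ∃ τ ∈ gComps E, ∃ F, F ⊆ HstarI E τ ∧ F.Nonempty ∧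
    e.2 = {x | ∀ g ∈ F, x ∈ g.2} ∧
    e.1 = {x | ∃ h ∈ HstarI E τ, e.2 ⊆ h.2 ∧ x ∈ h.1}}

/-- The hyperedges of `H[τ ∪ pa(τ)]` whose head is contained in `τ`. -/
def HstarF (E : HEdges V) (τ : Set V) : HEdges V :=
  {h ∈ hInduced E (τ ∪ hPaTau E τ) | h.2 ⊆ τ}

/-- The hyperedges of a family whose underlying vertex sets are maximal under
set containment. -/
def maximalIn (E : HEdges V) : HEdges V :=
  {h ∈ E | ∀ h' ∈ E, h.1 ∪ h.2 ⊆ h'.1 ∪ h'.2 → h'.1 ∪ h'.2 = h.1 ∪ h.2}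

/-- Descendants of `v` with respect to a parent relation. -/
def desc (par : V → V → Prop) (v : V) : Set V := {u | Relation.TransGen par v u}

/-- Non-descendants of `v`. -/
def ndOf (par : V → V → Prop) (v : V) : Set V := {u | u ∉ desc par v}

/-- Adjacency with respect to neighbor/parent relations. -/
def adjOf (nbr par : V → V → Prop) (u v : V) : Prop := par u v ∨ par v u ∨ nbr u v

/-- Boundary of a vertex. -/
def bdOf (nbr par : V → V → Prop) (v : V) : Set V := {u | par u v} ∪ {u | nbr u v}

/-- Closure of a vertex. -/
def clOf (nbr par : V → V → Prop) (v : V) : Set V := bdOf nbr par v ∪ {v}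

/-- `C` separates `A` and `B` in the undirected graph with pair set `U`:
every path from `A` to `B` meets `C`. -/
def Separates (U : Set (V × V)) (A B C : Set V) : Prop :=
  ∀ (n : ℕ) (f : Fin (n + 1) → V), f 0 ∈ A → f (Fin.last n) ∈ B →
    (∀ i : Fin n, (f i.castSucc, f i.succ) ∈ U) → ∃ i, f i ∈ C

section Prob

variable [Fintype V] [DecidableEq V] {X : V → Type*} [∀ v, Fintype (X v)]

/-- `p` is a probability mass function. -/
def IsPMF (p : (∀ v, X v) → ℝ) : Prop := (∀ x, 0 ≤ p x) ∧ ∑ x, p x = 1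

/-- Marginal of `p` on the coordinates in `S`, evaluated at `x`. -/
noncomputable def marginal (p : (∀ v, X v) → ℝ) (S : Set V) (x : ∀ v, X v) : ℝ :=
  ∑ y, Set.indicator {z : ∀ v, X v | ∀ v ∈ S, z v = x v} p y

/-- Conditional independence `A ⟂ B | C` for the pmf `p`. -/
def CI (p : (∀ v, X v) → ℝ) (A B C : Set V) : Prop :=
  ∀ x, marginal p (A ∪ B ∪ C) x * marginal p C x
      = marginal p (A ∪ C) x * marginal p (B ∪ C) x

/-- The intersection property (S5). -/
def S5 (p : (∀ v, X v) → ℝ) : Prop :=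
  ∀ A B C D : Set V, Disjoint A B → Disjoint A C → Disjoint A D →
    Disjoint B C → Disjoint B D → Disjoint C D →
    CI p A B (D ∪ C) → CI p A D (B ∪ C) → CI p A (B ∪ D) C

/-- Pairwise Markov property with respect to neighbor/parent relations. -/
def PairwiseMarkov (nbr par : V → V → Prop) (p : (∀ v, X v) → ℝ) : Prop :=
  ∀ v u, v ≠ u → ¬ adjOf nbr par v u → u ∈ ndOf par v →
    CI p {v} {u} (ndOf par v \ {v, u})

/-- Local Markov property with respect to neighbor/parent relations. -/
def LocalMarkov (nbr par : V → V → Prop) (p : (∀ v, X v) → ℝ) : Prop :=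
  ∀ v, CI p {v} (ndOf par v \ clOf nbr par v) (bdOf nbr par v)

/-- Global Markov property relative to a chain graph. -/
def GlobalMarkovG (E : Set (V × V)) (p : (∀ v, X v) → ℝ) : Prop :=
  ∀ A B C : Set V, Disjoint A B → Disjoint A C → Disjoint B C →
    Separates (moral (gInduced E (gAnt E (A ∪ B ∪ C)))) A B C → CI p A B C

/-- Global Markov property relative to a directed hypergraph. -/
def GlobalMarkovH (E : HEdges V) (p : (∀ v, X v) → ℝ) : Prop :=
  ∀ A B C : Set V, Disjoint A B → Disjoint A C → Disjoint B C →
    Separates (moral (shadow (hInduced E (hAnt E (A ∪ B ∪ C))))) A B C → CI p A B C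

/-- `f` depends only on the coordinates in `S`. -/
def DependsOn (f : (∀ v, X v) → ℝ) (S : Set V) : Prop :=
  ∀ x y, (∀ v ∈ S, x v = y v) → f x = f y

/-- Conditional pmf `p(x_S | x_T)` as a ratio of marginals. -/
noncomputable def condM (p : (∀ v, X v) → ℝ) (S T : Set V) (x : ∀ v, X v) : ℝ :=
  marginal p (S ∪ T) x / marginal p T x

/-- Sum of `F` over the coordinates in `τ`, the remaining coordinates fixed at `x`. -/
noncomputable def sumOver (τ : Set V) (F : (∀ v, X v) → ℝ) (x : ∀ v, X v) : ℝ :=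
  ∑ y, Set.indicator {z : ∀ v, X v | ∀ v, v ∉ τ → z v = x v} F y

/-- Factorization (CF) of a pmf according to a chain graph. -/
def FactorizesCG (E : Set (V × V)) (p : (∀ v, X v) → ℝ) : Prop :=
  (∀ x, p x = ∏ᶠ τ ∈ gComps E, condM p τ (gPaTau E τ) x) ∧
  ∀ τ ∈ gComps E, ∃ ψ : Set V → (∀ v, X v) → ℝ,
    (∀ K ∈ maxCliques (moral (gInduced E (τ ∪ gPaTau E τ))),
      (∀ x, 0 ≤ ψ K x) ∧ DependsOn (ψ K) K) ∧
    ∀ x, condM p τ (gPaTau E τ) x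
      = (∏ᶠ K ∈ maxCliques (moral (gInduced E (τ ∪ gPaTau E τ))), ψ K x) /
        sumOver τ (fun y => ∏ᶠ K ∈ maxCliques (moral (gInduced E (τ ∪ gPaTau E τ))), ψ K y) x

/-- Factorization (HF) of a pmf according to a directed acyclic hypergraph. -/
def FactorizesBH (E : HEdges V) (p : (∀ v, X v) → ℝ) : Prop :=
  (∀ x, p x = ∏ᶠ τ ∈ hComps E, condM p τ (hPaTau E τ) x) ∧
  ∀ τ ∈ hComps E, ∃ ψ : Set V × Set V → (∀ v, X v) → ℝ,
    (∀ h ∈ maximalIn (HstarF E τ), (∀ x, 0 ≤ ψ h x) ∧ DependsOn (ψ h) (h.1 ∪ h.2)) ∧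
    (∀ x, condM p τ (hPaTau E τ) x = ∏ᶠ h ∈ maximalIn (HstarF E τ), ψ h x) ∧
    (∀ x, sumOver τ (fun y => ∏ᶠ h ∈ maximalIn (HstarF E τ), ψ h y) x = 1)

/-- Factorization of a pmf according to a chain graph with intervened set `A`. -/
def FactorizesCGInt (E : Set (V × V)) (A : Set V) (f : (∀ v, X v) → ℝ) : Prop :=
  (∀ x, f x = ∏ᶠ τ ∈ gComps E, condM f (τ \ A) (gPaTau E τ ∪ (τ ∩ A)) x) ∧
  ∀ τ ∈ gComps E, ∃ ψ : Set V → (∀ v, X v) → ℝ,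
    (∀ K ∈ maxCliques (moral (gInduced E (τ ∪ gPaTau E τ))),
      (∀ x, 0 ≤ ψ K x) ∧ DependsOn (ψ K) K) ∧
    ∀ x, condM f (τ \ A) (gPaTau E τ ∪ (τ ∩ A)) x
      = (∏ᶠ K ∈ maxCliques (moral (gInduced E (τ ∪ gPaTau E τ))), ψ K x) /
        sumOver (τ \ A)
          (fun y => ∏ᶠ K ∈ maxCliques (moral (gInduced E (τ ∪ gPaTau E τ))), ψ K y) x

/-- Factorization of a pmf according to a directed acyclic hypergraph with
intervened set `A`. -/
def FactorizesBHInt (E : HEdges V) (A : Set V) (f : (∀ v, X v) → ℝ) : Prop :=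
  (∀ x, f x = ∏ᶠ τ ∈ hComps E, condM f (τ \ A) (hPaTau E τ ∪ (τ ∩ A)) x) ∧
  ∀ τ ∈ hComps E, ∃ ψ : Set V × Set V → (∀ v, X v) → ℝ,
    (∀ h ∈ maximalIn (HstarF E τ), (∀ x, 0 ≤ ψ h x) ∧ DependsOn (ψ h) (h.1 ∪ h.2)) ∧
    ∀ x, condM f (τ \ A) (hPaTau E τ ∪ (τ ∩ A)) x
      = (∏ᶠ h ∈ maximalIn (HstarF E τ), ψ h x) /
        sumOver (τ \ A) (fun y => ∏ᶠ h ∈ maximalIn (HstarF E τ), ψ h y) x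

/-- `f` is supported on configurations consistent with the intervention `x_A = a₀`. -/
def ConsistentWith (f : (∀ v, X v) → ℝ) (A : Set V) (a0 : ∀ v, X v) : Prop :=
  ∀ x, f x ≠ 0 → ∀ v ∈ A, x v = a0 v

end Prob

end BH

/-!
Every hyperedge of the canonical LWF DAH has as head an intersection of Phase-I heads, which are
cliques of the undirected part of `G`, and as tail a union of Phase-I tails `{v}` whose heads lie
among the children of `v`. Hence co-head steps of `H` are undirected edges of `G` and parent steps
of `H` are directed edges of `G`, so a partially directed cycle of `H` is one of `G`.
-/

namespace BH

variable {V : Type*}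

theorem PDCycle.mono {nbr par nbr' par' : V → V → Prop}
    (hnbr : ∀ u v, nbr u v → nbr' u v) (hpar : ∀ u v, par u v → par' u v)
    (h : PDCycle nbr par) : PDCycle nbr' par' := by
  obtain ⟨n, f, hstep, i, hi⟩ := h
  exact ⟨n, f, fun j => (hstep j).imp (hnbr _ _) (hpar _ _), i, hpar _ _ hi⟩

variable {E : Set (V × V)}

theorem isCliqueIn_uPart_of_mem_phase1 {h : Set V × Set V} (hh : h ∈ phase1 E) :
    IsCliqueIn (uPart E) h.2 := by
  rcases hh with ⟨_, _, hK, rfl⟩ | ⟨_, hK, -, rfl⟩ <;> exact hK.2.2.1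

theorem gPar_of_mem_phase1 {h : Set V × Set V} (hh : h ∈ phase1 E) {u v : V}
    (hu : u ∈ h.1) (hv : v ∈ h.2) : gPar E u v := by
  rcases hh with ⟨_, _, hK, rfl⟩ | ⟨_, -, -, rfl⟩
  · rw [Set.mem_singleton_iff.mp hu]
    exact hK.2.1 hv
  · exact absurd hu (Set.notMem_empty u)

theorem gNbr_of_hNbr_canonicalLWF {u v : V} (huv : hNbr (canonicalLWF E) u v) :
    gNbr E u v := by
  obtain ⟨e, he, hu, hv, hne⟩ := huv
  obtain ⟨_, -, F, hF, ⟨g, hg⟩, hhead, -⟩ := he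
  rw [hhead] at hu hv
  exact isCliqueIn_uPart_of_mem_phase1 (hF hg).1 u (hu g hg) v (hv g hg) hne

theorem gPar_of_hPar_canonicalLWF {u v : V} (huv : hPar (canonicalLWF E) u v) :
    gPar E u v := by
  obtain ⟨e, he, hu, hv⟩ := huv
  obtain ⟨_, -, _, -, -, -, htail⟩ := he
  rw [htail] at hu
  obtain ⟨g, hg, hsub, hug⟩ := hu
  exact gPar_of_mem_phase1 hg.1 hug (hsub hv)

end BH

theorem statement3_general {V : Type*} (E : Set (V × V))
    (hG : BH.IsChainGraph E) :
    BH.HAcyclic (BH.canonicalLWF E) :=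
  fun hcycle => hG (hcycle.mono (fun _ _ => BH.gNbr_of_hNbr_canonicalLWF)
    (fun _ _ => BH.gPar_of_hPar_canonicalLWF))

/-- The canonical LWF DAH of a chain graph is a directed acyclic
hypergraph, i.e., it contains no partially directed cycle. -/
theorem statement3 {V : Type*} [Fintype V] (E : Set (V × V))
    (hG : BH.IsChainGraph E) :
    BH.HAcyclic (BH.canonicalLWF E) :=
  statement3_general E hG
end

section
/- Let G be a chain graph, H its canonical LWF DAH, and p a probability mass function on ∏_{v∈V} X_v. Then p is global G-Markovian if and only if p is global H-Markovian. -/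
/-!
Every hyperedge of the canonical LWF DAH consists of a clique of the undirected part of `G`,
possibly with a common parent of all its vertices as tail, so its shadow has no edge that `G`
lacks. Conversely every edge of `G` lies in the shadow of a hyperedge contained in the closure
of the chain component of one of its endpoints, and such a closure stays inside any anterior set
containing that endpoint. Hence `G[ant S]` and the shadow of `H[ant S]` have the same edges
between distinct vertices; since anterior sets, moral graphs and separation ignore loops, both
global Markov properties demand the same conditional independences.
-/

namespace BH

variable {V : Type*}

section Paths

lemma reflTransGen_congr_of_ne {r r' : V → V → Prop}
    (h : ∀ ⦃a b⦄, a ≠ b → (r a b ↔ r' a b)) {a b : V} :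
    Relation.ReflTransGen r a b ↔ Relation.ReflTransGen r' a b := by
  have hrefl : Relation.ReflGen r = Relation.ReflGen r' := by
    ext a b
    simp only [Relation.reflGen_iff]
    by_cases hab : b = a
    · simp [hab]
    · simp [hab, h (Ne.symm hab)]
  rw [← Relation.reflTransGen_reflGen, hrefl, Relation.reflTransGen_reflGen]

lemma reflTransGen_of_fin_path {r : V → V → Prop} : ∀ {n : ℕ} (f : Fin (n + 1) → V),
    (∀ i : Fin n, r (f i.castSucc) (f i.succ)) → Relation.ReflTransGen r (f 0) (f (Fin.last n))
  | 0, _, _ => .refl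
  | _ + 1, f, hf => .head (hf 0) (reflTransGen_of_fin_path (Fin.tail f) fun i => hf i.succ)

lemma exists_fin_path_of_reflTransGen {r : V → V → Prop} {a b : V}
    (h : Relation.ReflTransGen r a b) :
    ∃ n, ∃ f : Fin (n + 1) → V, f 0 = a ∧ f (Fin.last n) = b ∧
      ∀ i : Fin n, r (f i.castSucc) (f i.succ) := by
  induction h using Relation.ReflTransGen.head_induction_on with
  | refl => exact ⟨0, fun _ => b, rfl, rfl, fun i => i.elim0⟩
  | head hac _ ih =>
    obtain ⟨n, f, hf0, hfl, hf⟩ := ih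
    refine ⟨n + 1, Fin.cons _ f, rfl, hfl, Fin.cases ?_ fun i => ?_⟩
    · simpa [hf0] using hac
    · simpa using hf i

theorem separates_iff_reflTransGen {U : Set (V × V)} {A B C : Set V} :
    Separates U A B C ↔ ∀ a ∈ A, ∀ b ∈ B,
      Relation.ReflTransGen (fun x y => x ∉ C ∧ (x, y) ∈ U) a b → b ∈ C := by
  constructor
  · intro hsep a ha b hb hab
    by_contra hbC
    obtain ⟨n, f, rfl, rfl, hf⟩ := exists_fin_path_of_reflTransGen hab
    obtain ⟨i, hi⟩ := hsep n f ha hb fun i => (hf i).2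
    induction i using Fin.lastCases with
    | last => exact hbC hi
    | cast i => exact (hf i).1 hi
  · intro h n f h0 hl hf
    by_contra! hC
    exact hC _ (h _ h0 _ hl (reflTransGen_of_fin_path f fun i => ⟨hC _, hf i⟩))

end Paths

def EqOffDiag (U U' : Set (V × V)) : Prop := ∀ ⦃u v : V⦄, u ≠ v → ((u, v) ∈ U ↔ (u, v) ∈ U')

namespace EqOffDiag

variable {U U' : Set (V × V)}

lemma gNbr_iff (h : EqOffDiag U U') {u v : V} (hne : u ≠ v) : gNbr U u v ↔ gNbr U' u v :=
  and_congr (h hne) (h hne.symm)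

lemma gPar_iff (h : EqOffDiag U U') {u v : V} (hne : u ≠ v) : gPar U u v ↔ gPar U' u v :=
  and_congr (h hne) (not_congr (h hne.symm))

lemma gComp_eq (h : EqOffDiag U U') (v : V) : gComp U v = gComp U' v :=
  Set.ext fun _ => reflTransGen_congr_of_ne fun _ _ => h.gNbr_iff

lemma gComps_eq (h : EqOffDiag U U') : gComps U = gComps U' := by
  simp only [gComps, h.gComp_eq]

lemma gBd_eq (h : EqOffDiag U U') (τ : Set V) : gBd U τ = gBd U' τ := by
  ext u
  simp only [gBd, Set.mem_sdiff, Set.mem_iUnion₂, Set.mem_union, gPaSet, gNbSet, Set.mem_ofPred_eq]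
  refine and_congr_left fun hu => exists₂_congr fun v hv => ?_
  have hne : u ≠ v := fun huv => hu (huv ▸ hv)
  rw [h.gPar_iff hne, h.gNbr_iff hne]

lemma moral (h : EqOffDiag U U') : EqOffDiag (moral U) (moral U') := by
  intro u v hne
  simp only [BH.moral, Set.mem_ofPred_eq, h hne, h hne.symm, h.gComps_eq, h.gBd_eq]

lemma gAnt_eq (h : EqOffDiag U U') (S : Set V) : gAnt U S = gAnt U' S := by
  ext w
  simp only [gAnt, antOf, Set.mem_ofPred_eq]
  refine exists_congr fun s => and_congr_right fun _ => reflTransGen_congr_of_ne fun a b hne => ?_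
  rw [h.gNbr_iff hne, h.gPar_iff hne]

lemma separates_iff (h : EqOffDiag U U') {A B C : Set V} :
    Separates U A B C ↔ Separates U' A B C := by
  simp only [separates_iff_reflTransGen]
  exact forall₂_congr fun _ _ => forall₂_congr fun _ _ => imp_congr_left <|
    reflTransGen_congr_of_ne fun _ _ hne => and_congr_right fun _ => h hne

end EqOffDiag

section Anterior

lemma mem_iff_gNbr_or_gPar {U : Set (V × V)} {u v : V} : (u, v) ∈ U ↔ gNbr U u v ∨ gPar U u v := by
  unfold gNbr gPar
  tauto

lemma mem_shadow_iff {H : HEdges V} {u v : V} :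
    (u, v) ∈ shadow H ↔ hNbr H u v ∨ hPar H u v := by
  simp only [shadow, hNbr, hPar, Set.mem_ofPred_eq, ← exists_or, ← and_or_left]

lemma shadow_mono {H H' : HEdges V} (h : H ⊆ H') : shadow H ⊆ shadow H' :=
  fun _ ⟨e, he, hp⟩ => ⟨e, h he, hp⟩

lemma mem_of_mem_shadow_hInduced {H : HEdges V} {A : Set V} {u v : V}
    (h : (u, v) ∈ shadow (hInduced H A)) : u ∈ A ∧ v ∈ A := by
  obtain ⟨e, ⟨-, heA⟩, ⟨hu, hv, -⟩ | ⟨hu, hv⟩⟩ := h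
  · exact ⟨heA (Or.inr hu), heA (Or.inr hv)⟩
  · exact ⟨heA (Or.inl hu), heA (Or.inr hv)⟩

lemma hAnt_eq_gAnt_shadow (H : HEdges V) (S : Set V) : hAnt H S = gAnt (shadow H) S := by
  simp only [hAnt, gAnt, antOf, ← mem_shadow_iff, ← mem_iff_gNbr_or_gPar]

variable {E : Set (V × V)} {S : Set V} {u w : V}

lemma mem_gAnt_of_reflTransGen (hwu : Relation.ReflTransGen (fun a b => gNbr E a b ∨ gPar E a b) w u)
    (hu : u ∈ gAnt E S) : w ∈ gAnt E S :=
  let ⟨s, hs, hus⟩ := hu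
  ⟨s, hs, hwu.trans hus⟩

lemma gComp_subset_gAnt (hu : u ∈ gAnt E S) : gComp E u ⊆ gAnt E S := fun _ hz =>
  mem_gAnt_of_reflTransGen
    (Relation.ReflTransGen.mono (fun _ _ h => Or.inl ⟨h.2, h.1⟩) _ _
      (Relation.reflTransGen_swap.2 hz)) hu

lemma gCl_gComp_subset_gAnt (hu : u ∈ gAnt E S) : gCl E (gComp E u) ⊆ gAnt E S := by
  rintro w (⟨hw, -⟩ | hw)
  · obtain ⟨v, hv, hwv⟩ := Set.mem_iUnion₂.1 hw
    exact mem_gAnt_of_reflTransGen (.single hwv.symm) (gComp_subset_gAnt hu hv)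
  · exact gComp_subset_gAnt hu hw

end Anterior

lemma exists_isMaxCliqueWithin [Finite V] {U : Set (V × V)} {S K₀ : Set V} (hK₀S : K₀ ⊆ S)
    (hK₀ : IsCliqueIn U K₀) (hne : K₀.Nonempty) : ∃ K, IsMaxCliqueWithin U S K ∧ K₀ ⊆ K := by
  obtain ⟨K, hK₀K, ⟨hKS, hK⟩, hmax⟩ :=
    Finite.exists_le_maximal (p := fun K => K ⊆ S ∧ IsCliqueIn U K) ⟨hK₀S, hK₀⟩
  exact ⟨K, ⟨hne.mono hK₀K, hKS, hK, fun K' hKK' hK'S hK' => (hmax ⟨hK'S, hK'⟩ hKK').antisymm hKK'⟩,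
    hK₀K⟩

section CanonicalLWF

variable {E : Set (V × V)}

lemma IsCliqueIn.subset_gComp {K : Set V} {a : V} (hK : IsCliqueIn (uPart E) K) (ha : a ∈ K) :
    K ⊆ gComp E a := by
  intro c hc
  by_cases hca : c = a
  · exact hca ▸ .refl
  · exact .single (hK a ha c hc (Ne.symm hca))

lemma phase1_spec {h : Set V × Set V} (hh : h ∈ phase1 E) :
    IsCliqueIn (uPart E) h.2 ∧ ∀ w ∈ h.1, h.2 ⊆ children E w := by
  rcases hh with ⟨v, K, hK, rfl⟩ | ⟨K, hK, -, rfl⟩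
  · exact ⟨hK.2.2.1, by rintro w rfl; exact hK.2.1⟩
  · exact ⟨hK.2.2.1, by rintro w ⟨⟩⟩

lemma canonicalLWF_spec {e : Set V × Set V} (he : e ∈ canonicalLWF E) :
    IsCliqueIn (uPart E) e.2 ∧ ∀ u ∈ e.1, ∀ v ∈ e.2, gPar E u v := by
  obtain ⟨τ, -, F, hF, ⟨g, hg⟩, he2, he1⟩ := he
  have hsub : e.2 ⊆ g.2 := he2 ▸ fun x hx => hx g hg
  refine ⟨fun a ha b hb => (phase1_spec (hF hg).1).1 a (hsub ha) b (hsub hb), ?_⟩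
  intro u hu v hv
  rw [he1] at hu
  obtain ⟨h, hh, hh2, hu⟩ := hu
  exact (phase1_spec hh.1).2 u hu (hh2 hv)

lemma shadow_canonicalLWF_subset : shadow (canonicalLWF E) ⊆ E := by
  rintro ⟨u, v⟩ ⟨e, he, ⟨hu, hv, hne⟩ | ⟨hu, hv⟩⟩
  · exact ((canonicalLWF_spec he).1 u hu v hv hne).1
  · exact ((canonicalLWF_spec he).2 u hu v hv).1

lemma exists_phase1_superset [Finite V] {K : Set V} (hK : IsCliqueIn (uPart E) K)
    (hne : K.Nonempty) : ∃ h ∈ phase1 E, K ⊆ h.2 := by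
  obtain ⟨K', hK', hKK'⟩ := exists_isMaxCliqueWithin (Set.subset_univ K) hK hne
  by_cases hcov : ∃ h ∈ phase1a E, K' ⊆ h.2
  · obtain ⟨h, hh, hK'h⟩ := hcov
    exact ⟨h, Or.inl hh, hKK'.trans hK'h⟩
  · push Not at hcov
    exact ⟨(∅, K'), Or.inr ⟨K', hK', hcov, rfl⟩, hKK'⟩

lemma mem_HstarI_of_mem_phase1 {h : Set V × Set V} {a : V} (hh : h ∈ phase1 E) (ha : a ∈ h.2) :
    h ∈ HstarI E (gComp E a) := by
  obtain ⟨hclique, htail⟩ := phase1_spec hh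
  refine ⟨hh, Set.union_subset (fun w hw => ?_) ((hclique.subset_gComp ha).trans
    Set.subset_union_right), a, ha, .refl⟩
  by_cases hwτ : w ∈ gComp E a
  · exact Or.inr hwτ
  · exact Or.inl ⟨Set.mem_biUnion Relation.ReflTransGen.refl (Or.inl (htail w hw ha)), hwτ⟩

lemma exists_canonicalLWF_of_mem_HstarI {τ : Set V} (hτ : τ ∈ gComps E) {h : Set V × Set V}
    (hh : h ∈ HstarI E τ) :
    ∃ e ∈ canonicalLWF E, h.1 ⊆ e.1 ∧ e.2 = h.2 ∧ e.1 ∪ e.2 ⊆ gCl E τ := by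
  refine ⟨({x | ∃ h' ∈ HstarI E τ, h.2 ⊆ h'.2 ∧ x ∈ h'.1}, h.2),
    ⟨τ, hτ, {h}, Set.singleton_subset_iff.2 hh, ⟨h, rfl⟩, by simp, rfl⟩,
    fun x hx => ⟨h, hh, le_rfl, hx⟩, rfl, ?_⟩
  rintro x (⟨h', hh', -, hx⟩ | hx)
  · exact hh'.2.1 (Or.inl hx)
  · exact hh.2.1 (Or.inr hx)

lemma exists_canonicalLWF_of_mem_phase1 {h : Set V × Set V} {a : V} (hh : h ∈ phase1 E)
    (ha : a ∈ h.2) :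
    ∃ e ∈ canonicalLWF E, h.1 ⊆ e.1 ∧ e.2 = h.2 ∧ e.1 ∪ e.2 ⊆ gCl E (gComp E a) :=
  exists_canonicalLWF_of_mem_HstarI ⟨a, rfl⟩ (mem_HstarI_of_mem_phase1 hh ha)

variable {A : Set V}

lemma mem_shadow_hInduced_of_mem_gInduced [Finite V] (hA : ∀ a ∈ A, gCl E (gComp E a) ⊆ A)
    {u v : V} (huv : (u, v) ∈ gInduced E A) (hne : u ≠ v) :
    (u, v) ∈ shadow (hInduced (canonicalLWF E) A) := by
  obtain ⟨huv, hu, hv⟩ := huv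
  rcases mem_iff_gNbr_or_gPar.1 huv with hnbr | hpar
  · have hclique : IsCliqueIn (uPart E) {u, v} := by
      rintro a (rfl | rfl) b (rfl | rfl) hab
      exacts [absurd rfl hab, hnbr, ⟨hnbr.2, hnbr.1⟩, absurd rfl hab]
    obtain ⟨h, hh, huvh⟩ := exists_phase1_superset hclique ⟨u, Or.inl rfl⟩
    obtain ⟨e, he, -, he2, heA⟩ := exists_canonicalLWF_of_mem_phase1 hh (huvh (Or.inl rfl))
    exact ⟨e, ⟨he, heA.trans (hA u hu)⟩,
      Or.inl ⟨he2 ▸ huvh (Or.inl rfl), he2 ▸ huvh (Or.inr rfl), hne⟩⟩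
  · obtain ⟨K, hK, hvK⟩ := exists_isMaxCliqueWithin (S := children E u)
      (Set.singleton_subset_iff.2 hpar) (fun a ha b hb hab => absurd (ha.trans hb.symm) hab)
      (Set.singleton_nonempty v)
    obtain ⟨e, he, he1, he2, heA⟩ :=
      exists_canonicalLWF_of_mem_phase1 (Or.inl ⟨u, K, hK, rfl⟩) (hvK rfl)
    exact ⟨e, ⟨he, heA.trans (hA v hv)⟩, Or.inr ⟨he1 rfl, he2 ▸ hvK rfl⟩⟩

lemma eqOffDiag_shadow_hInduced_canonicalLWF [Finite V]
    (hA : ∀ a ∈ A, gCl E (gComp E a) ⊆ A) :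
    EqOffDiag (shadow (hInduced (canonicalLWF E) A)) (gInduced E A) := fun _ _ hne =>
  ⟨fun h => ⟨shadow_canonicalLWF_subset (shadow_mono (fun _ he => he.1) h),
      mem_of_mem_shadow_hInduced h⟩,
    fun h => mem_shadow_hInduced_of_mem_gInduced hA h hne⟩

lemma eqOffDiag_shadow_canonicalLWF [Finite V] : EqOffDiag (shadow (canonicalLWF E)) E := by
  simpa [hInduced, gInduced] using
    eqOffDiag_shadow_hInduced_canonicalLWF (E := E) (A := Set.univ) fun _ _ => Set.subset_univ _

theorem separates_moral_shadow_hInduced_hAnt_iff [Finite V] (S A B C : Set V) :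
    Separates (moral (shadow (hInduced (canonicalLWF E) (hAnt (canonicalLWF E) S)))) A B C ↔
      Separates (moral (gInduced E (gAnt E S))) A B C := by
  rw [hAnt_eq_gAnt_shadow, eqOffDiag_shadow_canonicalLWF.gAnt_eq]
  exact (eqOffDiag_shadow_hInduced_canonicalLWF fun _ => gCl_gComp_subset_gAnt).moral.separates_iff

end CanonicalLWF

end BH

theorem statement10_general {V : Type*} [Fintype V] [DecidableEq V]
    {X : V → Type*} [∀ v, Fintype (X v)]
    (E : Set (V × V))
    (p : (∀ v, X v) → ℝ) :
    BH.GlobalMarkovG E p ↔ BH.GlobalMarkovH (BH.canonicalLWF E) p := by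
  simp only [BH.GlobalMarkovG, BH.GlobalMarkovH, BH.separates_moral_shadow_hInduced_hAnt_iff]

/-- A pmf is global Markovian relative to a chain graph if and only
if it is global Markovian relative to the canonical LWF DAH of the chain graph. -/
theorem statement10 {V : Type*} [Fintype V] [DecidableEq V]
    {X : V → Type*} [∀ v, Fintype (X v)]
    (E : Set (V × V)) (hG : BH.IsChainGraph E)
    (p : (∀ v, X v) → ℝ) (hp : BH.IsPMF p) :
    BH.GlobalMarkovG E p ↔ BH.GlobalMarkovH (BH.canonicalLWF E) p :=
  statement10_general E p
end
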